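/- Let (X, x₀) be a pointed topological space. The following are equivalent: (1) the trivial subgroup {1} is closed in π₁^wh(X, x₀); (2) π₁^wh(X, x₀) is Hausdorff; (3) π₁^wh(X, x₀) is T₃ (Hausdorff and regular); (4) X is homotopically Hausdorff at x₀. -/

import Mathlib

/-!
For an open `U ∋ x₀` the basic set `B([ζ], U)` is the left coset `[ζ] · H_U` of the subgroup
`H_U = i_#(π₁(U, x₀))`. Distinct cosets of `H_U` are disjoint, so every basic set is clopen and
`π₁^wh(X, x₀)` is regular. The trivial class is closed iff `⋂_U H_U` is trivial, which is the
homotopically Hausdorff condition; and under that condition distinct classes `a ≠ b` are separated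
by the cosets `a · H_U`, `b · H_U` for any `U` with `b⁻¹a ∉ H_U`.
-/

open Set TopologicalSpace

attribute [local instance] Path.Homotopic.setoid

universe u v

variable {X : Type u} [TopologicalSpace X]

/-- The basic whisker-topology set `B([ζ],U)`: all classes of the form `[ζ·η]`
where `η` is a loop based at `x₀` with image in `U`. -/
def whiskerB {x₀ : X} (ζ : Path.Homotopic.Quotient x₀ x₀) (U : Set X) :
    Set (Path.Homotopic.Quotient x₀ x₀) :=
  {g | ∃ η : Path x₀ x₀, Set.range η ⊆ U ∧ g = ζ.trans ⟦η⟧}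

/-- The whisker topology on `π₁(X, x₀)`, generated by the basic sets `B([ζ],U)`
for `U` an open neighborhood of `x₀`. -/
def whiskerTopology (x₀ : X) : TopologicalSpace (Path.Homotopic.Quotient x₀ x₀) :=
  TopologicalSpace.generateFrom
    {S | ∃ (ζ : Path.Homotopic.Quotient x₀ x₀) (U : Set X),
      IsOpen U ∧ x₀ ∈ U ∧ S = whiskerB ζ U}

/-- Inversion `[ζ] ↦ [ζ⁻]` on `π₁(X, x₀)`. -/
def whiskerInv {x₀ : X} : Path.Homotopic.Quotient x₀ x₀ → Path.Homotopic.Quotient x₀ x₀ :=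
  Quotient.map Path.symm (fun _ _ h => Nonempty.map Path.Homotopy.symm₂ h)

/-- `π₁^wh(X, x₀)` is a topological group: the multiplication `([ζ],[η]) ↦ [ζ·η]`
is jointly continuous and inversion `[ζ] ↦ [ζ⁻]` is continuous, with respect to
the whisker topology. -/
def IsWhiskerTopGroup (x₀ : X) : Prop :=
  letI := whiskerTopology x₀
  Continuous (fun p : Path.Homotopic.Quotient x₀ x₀ × Path.Homotopic.Quotient x₀ x₀ =>
    p.1.trans p.2) ∧
  Continuous (whiskerInv (x₀ := x₀))

namespace Path.Homotopic.Quotient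

theorem eq_trans_iff_symm_trans_eq {x₀ x₁ x₂ : X} (a : Path.Homotopic.Quotient x₀ x₂)
    (b : Path.Homotopic.Quotient x₀ x₁) (c : Path.Homotopic.Quotient x₁ x₂) :
    a = b.trans c ↔ b.symm.trans a = c := by
  constructor <;> rintro rfl <;> simp [← trans_assoc]

end Path.Homotopic.Quotient

open Topology Path.Homotopic.Quotient

attribute [local instance] whiskerTopology

section WhiskerTopology

variable {x₀ : X} {U V : Set X} {ζ g : Path.Homotopic.Quotient x₀ x₀}

-- `whiskerB` is phrased with `⟦η⟧ : Quotient _`, on which `rw`/`simp` with the groupoid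
-- lemmas about `Path.Homotopic.Quotient` fail; this restatement with `mk` is used instead.
theorem mem_whiskerB_iff :
    g ∈ whiskerB ζ U ↔ ∃ η : Path x₀ x₀, range η ⊆ U ∧ g = ζ.trans (mk η) :=
  Iff.rfl

theorem mem_whiskerB_self (hU : x₀ ∈ U) (ζ : Path.Homotopic.Quotient x₀ x₀) :
    ζ ∈ whiskerB ζ U :=
  ⟨Path.refl x₀, by simpa using hU, (Path.Homotopic.Quotient.trans_refl ζ).symm⟩

theorem whiskerB_mono (hUV : U ⊆ V) : whiskerB ζ U ⊆ whiskerB ζ V := by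
  rintro _ ⟨η, hη, rfl⟩
  exact ⟨η, hη.trans hUV, rfl⟩

theorem whiskerB_subset_of_mem (hg : g ∈ whiskerB ζ U) : whiskerB g U ⊆ whiskerB ζ U := by
  obtain ⟨η, hη, rfl⟩ := hg
  rintro _ ⟨η', hη', rfl⟩
  refine ⟨η.trans η', by simpa [Path.trans_range] using ⟨hη, hη'⟩, ?_⟩
  exact Path.Homotopic.Quotient.trans_assoc _ _ _

theorem mem_whiskerB_comm : g ∈ whiskerB ζ U ↔ ζ ∈ whiskerB g U := by
  suffices ∀ {g ζ : Path.Homotopic.Quotient x₀ x₀}, g ∈ whiskerB ζ U → ζ ∈ whiskerB g U from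
    ⟨this, this⟩
  rintro g ζ ⟨η, hη, rfl⟩
  refine ⟨η.symm, by rwa [Path.symm_range], ?_⟩
  show ζ = (ζ.trans (mk η)).trans (mk η).symm
  simp

theorem disjoint_whiskerB_of_notMem (h : g ∉ whiskerB ζ U) :
    Disjoint (whiskerB g U) (whiskerB ζ U) :=
  Set.disjoint_left.2 fun _ hg hζ => h (whiskerB_subset_of_mem hζ (mem_whiskerB_comm.1 hg))

theorem mem_whiskerB_iff_symm_trans_mem :
    g ∈ whiskerB ζ U ↔ ζ.symm.trans g ∈ whiskerB (refl x₀) U := by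
  simp only [mem_whiskerB_iff, Path.Homotopic.Quotient.refl_trans, eq_trans_iff_symm_trans_eq]

theorem mk_mem_whiskerB_refl_iff {ζ : Path x₀ x₀} :
    mk ζ ∈ whiskerB (refl x₀) U ↔ ∃ η : Path x₀ x₀, range η ⊆ U ∧ ζ.Homotopic η := by
  simp only [mem_whiskerB_iff, Path.Homotopic.Quotient.refl_trans]
  exact exists_congr fun η => and_congr_right fun _ => Path.Homotopic.Quotient.eq

theorem isTopologicalBasis_whiskerB :
    IsTopologicalBasis {S | ∃ (ζ : Path.Homotopic.Quotient x₀ x₀) (U : Set X),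
      IsOpen U ∧ x₀ ∈ U ∧ S = whiskerB ζ U} := by
  refine ⟨?_, ?_, rfl⟩
  · rintro _ ⟨ζ₁, U₁, hU₁, hx₁, rfl⟩ _ ⟨ζ₂, U₂, hU₂, hx₂, rfl⟩ g ⟨hg₁, hg₂⟩
    refine ⟨whiskerB g (U₁ ∩ U₂), ⟨g, _, hU₁.inter hU₂, ⟨hx₁, hx₂⟩, rfl⟩,
      mem_whiskerB_self (U := U₁ ∩ U₂) ⟨hx₁, hx₂⟩ g, fun k hk => ⟨?_, ?_⟩⟩
    · exact whiskerB_subset_of_mem hg₁ (whiskerB_mono Set.inter_subset_left hk)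
    · exact whiskerB_subset_of_mem hg₂ (whiskerB_mono Set.inter_subset_right hk)
  · exact Set.eq_univ_of_forall fun g =>
      ⟨_, ⟨g, univ, isOpen_univ, trivial, rfl⟩, mem_whiskerB_self (mem_univ x₀) g⟩

theorem nhds_hasBasis_whiskerB (g : Path.Homotopic.Quotient x₀ x₀) :
    (𝓝 g).HasBasis (fun U : Set X => IsOpen U ∧ x₀ ∈ U) (whiskerB g) := by
  refine isTopologicalBasis_whiskerB.nhds_hasBasis.to_hasBasis ?_ ?_
  · rintro _ ⟨⟨ζ, U, hU, hx, rfl⟩, hg⟩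
    exact ⟨U, ⟨hU, hx⟩, whiskerB_subset_of_mem hg⟩
  · rintro U ⟨hU, hx⟩
    exact ⟨_, ⟨⟨g, U, hU, hx, rfl⟩, mem_whiskerB_self hx g⟩, subset_rfl⟩

theorem isOpen_whiskerB (g : Path.Homotopic.Quotient x₀ x₀) (hU : IsOpen U) (hx : x₀ ∈ U) :
    IsOpen (whiskerB g U) :=
  isTopologicalBasis_whiskerB.isOpen ⟨g, U, hU, hx, rfl⟩

theorem isClosed_whiskerB (g : Path.Homotopic.Quotient x₀ x₀) (hU : IsOpen U) (hx : x₀ ∈ U) :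
    IsClosed (whiskerB g U) := by
  refine isOpen_compl_iff.1 (isOpen_iff_mem_nhds.2 fun k hk => ?_)
  exact (nhds_hasBasis_whiskerB k).mem_of_superset ⟨hU, hx⟩
    (disjoint_whiskerB_of_notMem hk).subset_compl_right

theorem regularSpace_whiskerTopology : RegularSpace (Path.Homotopic.Quotient x₀ x₀) :=
  .of_hasBasis nhds_hasBasis_whiskerB fun g _ hU => isClosed_whiskerB g hU.1 hU.2

-- `whiskerB (refl x₀) U` is the image of `π₁(U, x₀)` in `π₁(X, x₀)`.
variable (x₀) in
def HomotopicallyHausdorffAt : Prop :=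
  ∀ g : Path.Homotopic.Quotient x₀ x₀, g ≠ refl x₀ →
    ∃ U : Set X, IsOpen U ∧ x₀ ∈ U ∧ g ∉ whiskerB (refl x₀) U

theorem homotopicallyHausdorffAt_iff :
    HomotopicallyHausdorffAt x₀ ↔ ∀ ζ : Path x₀ x₀, mk ζ ≠ refl x₀ →
      ∃ U : Set X, IsOpen U ∧ x₀ ∈ U ∧ ∀ η : Path x₀ x₀, range η ⊆ U → ¬ ζ.Homotopic η := by
  simp only [HomotopicallyHausdorffAt, Path.Homotopic.Quotient.mk_surjective.forall,
    mk_mem_whiskerB_refl_iff, not_exists, not_and]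

theorem isClosed_singleton_refl_iff_homotopicallyHausdorffAt :
    IsClosed {refl x₀} ↔ HomotopicallyHausdorffAt x₀ := by
  rw [← isOpen_compl_iff, isOpen_iff_mem_nhds]
  refine forall_congr' fun g => forall_congr' fun _ => ?_
  simp only [(nhds_hasBasis_whiskerB g).mem_iff, subset_compl_singleton_iff, and_assoc,
    mem_whiskerB_comm]

theorem HomotopicallyHausdorffAt.t2Space (h : HomotopicallyHausdorffAt x₀) :
    T2Space (Path.Homotopic.Quotient x₀ x₀) := by
  refine ⟨fun a b hab => ?_⟩
  have hba : b.symm.trans a ≠ refl x₀ := by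
    rwa [Ne, ← eq_trans_iff_symm_trans_eq, Path.Homotopic.Quotient.trans_refl]
  obtain ⟨U, hU, hx, hab'⟩ := h _ hba
  rw [← mem_whiskerB_iff_symm_trans_mem] at hab'
  exact ⟨_, _, isOpen_whiskerB a hU hx, isOpen_whiskerB b hU hx, mem_whiskerB_self hx a,
    mem_whiskerB_self hx b, disjoint_whiskerB_of_notMem hab'⟩

end WhiskerTopology

/-- The following are equivalent: (1) the trivial subgroup `{1}` is closed in
`π₁^wh(X, x₀)`; (2) `π₁^wh(X, x₀)` is Hausdorff; (3) `π₁^wh(X, x₀)` is `T₃`; (4) `X` is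
homotopically Hausdorff at `x₀`. -/
theorem whisker_hausdorff_tfae (x₀ : X) :
    [ @IsClosed _ (whiskerTopology x₀)
        {(⟦Path.refl x₀⟧ : Path.Homotopic.Quotient x₀ x₀)},
      @T2Space _ (whiskerTopology x₀),
      @T3Space _ (whiskerTopology x₀),
      ∀ ζ : Path x₀ x₀, (⟦ζ⟧ : Path.Homotopic.Quotient x₀ x₀) ≠ ⟦Path.refl x₀⟧ →
        ∃ U : Set X, IsOpen U ∧ x₀ ∈ U ∧
          ∀ η : Path x₀ x₀, Set.range ⇑η ⊆ U → ¬ ζ.Homotopic η ].TFAE := by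
  have := regularSpace_whiskerTopology (x₀ := x₀)
  tfae_have 1 ↔ 4 :=
    isClosed_singleton_refl_iff_homotopicallyHausdorffAt.trans homotopicallyHausdorffAt_iff
  tfae_have 4 → 2 := fun h => (homotopicallyHausdorffAt_iff.2 h).t2Space
  tfae_have 2 ↔ 3 := ⟨fun _ => inferInstance, fun _ => inferInstance⟩
  tfae_have 2 → 1 := fun _ => isClosed_singleton
  tfae_finish
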